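/- Let k ≥ 3 be an odd integer, a = π/k, and let q : (0,π) → ℂ be any function. Then for every t ∈ (0,a), the function W_{1,0} associated with q satisfies ∑_{j=0}^{(k−1)/2} (−1)^j W_{1,0}(2ja + t) = ∑_{j=1}^{(k−1)/2} (−1)^j W_{1,0}(2ja − t). -/
import Mathlib


/-- The function `W_{1,0}` associated with `q`, where `a = π/k`. -/
noncomputable def W10 (k : ℕ) (q : ℝ → ℂ) (t : ℝ) : ℂ :=
  let a := Real.pi / k
  if t ∈ Set.Ioo 0 a then
    (q (((k : ℝ) - 1) * a + t) - q (((k : ℝ) - 1) * a - t)) / 2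
  else if t ∈ Set.Ioo a (((k : ℝ) - 1) * a) then
    (-q (((k : ℝ) + 1) * a - t) - q (((k : ℝ) - 1) * a - t)) / 2
  else if t ∈ Set.Ioo (((k : ℝ) - 1) * a) Real.pi then
    -(q (((k : ℝ) + 1) * a - t) + q (t - ((k : ℝ) - 1) * a)) / 2
  else 0

private lemma key_alg (n : ℕ) (g h : ℕ → ℂ) :
    ((∑ j ∈ Finset.range n, (-1:ℂ)^(j+1) * ((-h j - h (j+1))/2)) +
      (-1:ℂ)^(n+1) * (-(h n + g (n+1))/2)) + (-1:ℂ)^(0:ℕ) * ((g 0 - h 0)/2)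
    = ∑ i ∈ Finset.range (n+1), (-1:ℂ)^(1+i) * ((-g i - g (i+1))/2) := by
  induction n with
  | zero => simp; ring
  | succ n ih =>
    rw [Finset.sum_range_succ, Finset.sum_range_succ
      (f := fun i => (-1:ℂ)^(1+i) * ((-g i - g (i+1))/2)), ← ih]
    ring

theorem W10_degeneration (k : ℕ) (hk : 3 ≤ k) (hodd : Odd k) (q : ℝ → ℂ) :
    ∀ t ∈ Set.Ioo (0:ℝ) (Real.pi / k),
      ∑ j ∈ Finset.range ((k - 1) / 2 + 1),
          (-1 : ℂ) ^ j * W10 k q (2 * j * (Real.pi / k) + t) =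
        ∑ j ∈ Finset.Icc 1 ((k - 1) / 2),
          (-1 : ℂ) ^ j * W10 k q (2 * j * (Real.pi / k) - t) := by
  obtain ⟨m, hm⟩ := hodd
  obtain ⟨n, rfl⟩ : ∃ n, m = n + 1 := ⟨m - 1, by omega⟩
  subst hm
  intro t ht
  obtain ⟨ht1, ht2⟩ := ht
  set a : ℝ := Real.pi / ((2*(n+1)+1 : ℕ) : ℝ) with ha
  have hK : ((2*(n+1)+1 : ℕ) : ℝ) = 2*(n:ℝ)+3 := by push_cast; ring
  have ha0 : 0 < a := by rw [ha, hK]; positivity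
  have hka : (2*(n:ℝ)+3) * a = Real.pi := by
    rw [ha, hK]
    have : (2*(n:ℝ)+3) ≠ 0 := by positivity
    field_simp
  have hc1 : ((2*(n+1)+1 : ℕ) : ℝ) - 1 = 2*(n:ℝ)+2 := by push_cast; ring
  have hc2 : ((2*(n+1)+1 : ℕ) : ℝ) + 1 = 2*(n:ℝ)+4 := by push_cast; ring
  set g : ℕ → ℂ := fun j => q ((2*(n:ℝ)+2 - 2*(j:ℝ))*a + t) with hg
  set h : ℕ → ℂ := fun j => q ((2*(n:ℝ)+2 - 2*(j:ℝ))*a - t) with hh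
  -- branch lemmas
  have W1 : ∀ x : ℝ, 0 < x → x < a →
      W10 (2*(n+1)+1) q x = (q ((2*(n:ℝ)+2)*a + x) - q ((2*(n:ℝ)+2)*a - x))/2 := by
    intro x h1 h2
    simp only [W10]
    rw [← ha, hc1, if_pos (Set.mem_Ioo.mpr ⟨h1, h2⟩)]
  have Wmid : ∀ x : ℝ, a < x → x < (2*(n:ℝ)+2)*a →
      W10 (2*(n+1)+1) q x = (-q ((2*(n:ℝ)+4)*a - x) - q ((2*(n:ℝ)+2)*a - x))/2 := by
    intro x h1 h2
    simp only [W10]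
    rw [← ha, hc1, hc2, if_neg (by
        rw [Set.mem_Ioo]; rintro ⟨hx1, hx2⟩; linarith),
      if_pos (Set.mem_Ioo.mpr ⟨h1, h2⟩)]
  have Wtop : ∀ x : ℝ, (2*(n:ℝ)+2)*a < x → x < Real.pi →
      W10 (2*(n+1)+1) q x = -(q ((2*(n:ℝ)+4)*a - x) + q (x - (2*(n:ℝ)+2)*a))/2 := by
    intro x h1 h2
    have hn0 : (0:ℝ) ≤ (n:ℝ) := Nat.cast_nonneg n
    have haux : a < (2*(n:ℝ)+2)*a := by nlinarith
    simp only [W10]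
    rw [← ha, hc1, hc2, if_neg (by
        rw [Set.mem_Ioo]; rintro ⟨hx1, hx2⟩; linarith),
      if_neg (by rw [Set.mem_Ioo]; rintro ⟨hx1, hx2⟩; linarith),
      if_pos (Set.mem_Ioo.mpr ⟨h1, h2⟩)]
  -- normalize the index bounds
  simp only [show (2*(n+1)+1 - 1)/2 + 1 = n + 2 from by omega,
    show (2*(n+1)+1 - 1)/2 = n + 1 from by omega]
  rw [Finset.sum_range_succ', Finset.sum_range_succ, ← Finset.Ico_add_one_right_eq_Icc,
    Finset.sum_Ico_eq_sum_range]
  simp only [show n + 1 + 1 - 1 = n + 1 from by omega]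
  -- term evaluations
  have e0 : W10 (2*(n+1)+1) q (2 * ((0:ℕ):ℝ) * a + t) = (g 0 - h 0)/2 := by
    rw [show 2 * ((0:ℕ):ℝ) * a + t = t from by push_cast; ring, W1 t ht1 ht2]
    simp only [hg, hh]
    rw [show (2*(n:ℝ)+2 - 2*((0:ℕ):ℝ)) = 2*(n:ℝ)+2 from by push_cast; ring]
  have etop : W10 (2*(n+1)+1) q (2 * ((n+1:ℕ):ℝ) * a + t) = -(h n + g (n+1))/2 := by
    have hn0 : (0:ℝ) ≤ (n:ℝ) := Nat.cast_nonneg n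
    have hcn : ((n+1:ℕ):ℝ) = (n:ℝ)+1 := by push_cast; ring
    have h1 : (2*(n:ℝ)+2)*a < 2 * ((n+1:ℕ):ℝ) * a + t := by rw [hcn]; nlinarith
    have h2 : 2 * ((n+1:ℕ):ℝ) * a + t < Real.pi := by rw [hcn, ← hka]; nlinarith
    rw [Wtop _ h1 h2]
    simp only [hg, hh]
    rw [show (2*(n:ℝ)+4)*a - (2 * ((n+1:ℕ):ℝ) * a + t)
        = (2*(n:ℝ)+2 - 2*(n:ℝ))*a - t from by push_cast; ring,
      show 2 * ((n+1:ℕ):ℝ) * a + t - (2*(n:ℝ)+2)*a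
        = (2*(n:ℝ)+2 - 2*((n+1:ℕ):ℝ))*a + t from by push_cast; ring]
  have emid : ∀ x ∈ Finset.range n,
      (-1:ℂ)^(x+1) * W10 (2*(n+1)+1) q (2 * ((x+1:ℕ):ℝ) * a + t)
        = (-1:ℂ)^(x+1) * ((-h x - h (x+1))/2) := by
    intro x hx
    have hxn : (x:ℝ) + 1 ≤ (n:ℝ) := by
      exact_mod_cast Nat.succ_le_of_lt (Finset.mem_range.mp hx)
    have hx0 : (0:ℝ) ≤ (x:ℝ) := Nat.cast_nonneg x
    have hcx : ((x+1:ℕ):ℝ) = (x:ℝ)+1 := by push_cast; ring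
    have h1 : a < 2 * ((x+1:ℕ):ℝ) * a + t := by rw [hcx]; nlinarith
    have h2 : 2 * ((x+1:ℕ):ℝ) * a + t < (2*(n:ℝ)+2)*a := by rw [hcx]; nlinarith
    rw [Wmid _ h1 h2]
    simp only [hh]
    rw [show (2*(n:ℝ)+4)*a - (2 * ((x+1:ℕ):ℝ) * a + t)
        = (2*(n:ℝ)+2 - 2*(x:ℝ))*a - t from by push_cast; ring,
      show (2*(n:ℝ)+2)*a - (2 * ((x+1:ℕ):ℝ) * a + t)
        = (2*(n:ℝ)+2 - 2*((x+1:ℕ):ℝ))*a - t from by push_cast; ring]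
  have emid' : ∀ x ∈ Finset.range (n+1),
      (-1:ℂ)^(1+x) * W10 (2*(n+1)+1) q (2 * ((1+x:ℕ):ℝ) * a - t)
        = (-1:ℂ)^(1+x) * ((-g x - g (x+1))/2) := by
    intro x hx
    have hxn : (x:ℝ) ≤ (n:ℝ) := by
      exact_mod_cast Nat.lt_succ_iff.mp (Finset.mem_range.mp hx)
    have hx0 : (0:ℝ) ≤ (x:ℝ) := Nat.cast_nonneg x
    have hcx : ((1+x:ℕ):ℝ) = (x:ℝ)+1 := by push_cast; ring
    have h1 : a < 2 * ((1+x:ℕ):ℝ) * a - t := by rw [hcx]; nlinarith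
    have h2 : 2 * ((1+x:ℕ):ℝ) * a - t < (2*(n:ℝ)+2)*a := by rw [hcx]; nlinarith
    rw [Wmid _ h1 h2]
    simp only [hg]
    rw [show (2*(n:ℝ)+4)*a - (2 * ((1+x:ℕ):ℝ) * a - t)
        = (2*(n:ℝ)+2 - 2*(x:ℝ))*a + t from by push_cast; ring,
      show (2*(n:ℝ)+2)*a - (2 * ((1+x:ℕ):ℝ) * a - t)
        = (2*(n:ℝ)+2 - 2*((x+1:ℕ):ℝ))*a + t from by push_cast; ring]
  rw [Finset.sum_congr rfl emid, Finset.sum_congr rfl emid', e0, etop]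
  exact key_alg n g h
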